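/- Let $k^+ > 0$ and $k^- < 0$ with $|k^-|/k^+ \ne 1$, and set $(k_1, k_2, k_3) = (k^-, k^+, k^+)$. Then for every tuple of continuous functions $f_j : [0,1] \to \mathbb{R}$ ($j = 1,2,3$) there exists a unique tuple of twice continuously differentiable functions $\psi_j : [0,1] \to \mathbb{R}$ satisfying: $-k_j \psi_j'' = f_j$ on $[0,1]$ for $j=1,2,3$; $\psi_3(0) = 0$; $\psi_1(0) = \psi_2(0)$; $k_1 \psi_1'(0) + k_2 \psi_2'(0) = 0$; $\psi_1(1) = \psi_2(1) = \psi_3(1)$; and $k_1 \psi_1'(1) + k_2 \psi_2'(1) + k_3 \psi_3'(1) = 0$. -/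

import Mathlib

/-!
On each edge the solutions of `-k ψ'' = f` are one particular solution plus an arbitrary affine
function, so the vertex conditions become a linear system for the six affine coefficients. For the
homogeneous problem the Dirichlet condition and the Kirchhoff condition at the internal vertex
kill the slope of the tail, continuity around the loop forces equal slopes on its two edges, and
the Kirchhoff condition at the loop vertex then reads `(k₁ + k₂) β = 0`. So the system is
uniquely solvable as soon as `k₁ + k₂ ≠ 0`, i.e. `|k⁻| ≠ k⁺`, and its solution is explicit.
-/

/-- Classical solution of the three-edge tadpole network problem with all edges of
length `1`: the loop consists of edges `1` and `2` joined at a vertex (coordinate `0`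
of both) and at the internal vertex (coordinate `1` of both), the tail edge `3` joins
the internal vertex (its coordinate `1`) to the external Dirichlet vertex
(coordinate `0`). -/
def IsThreeTadpoleSolution (k₁ k₂ k₃ : ℝ) (f₁ f₂ f₃ : ℝ → ℝ)
    (ψ₁ ψ₂ ψ₃ : ℝ → ℝ) : Prop :=
  ContDiffOn ℝ 2 ψ₁ (Set.Icc 0 1) ∧ ContDiffOn ℝ 2 ψ₂ (Set.Icc 0 1) ∧
  ContDiffOn ℝ 2 ψ₃ (Set.Icc 0 1) ∧
  (∀ x ∈ Set.Icc (0 : ℝ) 1, -(k₁ * iteratedDerivWithin 2 ψ₁ (Set.Icc 0 1) x) = f₁ x) ∧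
  (∀ x ∈ Set.Icc (0 : ℝ) 1, -(k₂ * iteratedDerivWithin 2 ψ₂ (Set.Icc 0 1) x) = f₂ x) ∧
  (∀ x ∈ Set.Icc (0 : ℝ) 1, -(k₃ * iteratedDerivWithin 2 ψ₃ (Set.Icc 0 1) x) = f₃ x) ∧
  ψ₃ 0 = 0 ∧
  ψ₁ 0 = ψ₂ 0 ∧
  k₁ * derivWithin ψ₁ (Set.Icc 0 1) 0 + k₂ * derivWithin ψ₂ (Set.Icc 0 1) 0 = 0 ∧
  ψ₁ 1 = ψ₂ 1 ∧ ψ₂ 1 = ψ₃ 1 ∧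
  k₁ * derivWithin ψ₁ (Set.Icc 0 1) 1 + k₂ * derivWithin ψ₂ (Set.Icc 0 1) 1
    + k₃ * derivWithin ψ₃ (Set.Icc 0 1) 1 = 0

open Set

section SecondDerivative

variable {a b : ℝ}

theorem iteratedDerivWithin_two (f : ℝ → ℝ) (s : Set ℝ) (x : ℝ) :
    iteratedDerivWithin 2 f s x = derivWithin (derivWithin f s) s x := by
  rw [iteratedDerivWithin_succ, iteratedDerivWithin_one]

theorem eq_affine_of_iteratedDerivWithin_two_eq_zero {h : ℝ → ℝ} (hab : a < b)
    (hh : ContDiffOn ℝ 2 h (Icc a b))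
    (h₂ : ∀ x ∈ Icc a b, iteratedDerivWithin 2 h (Icc a b) x = 0) :
    ∀ x ∈ Icc a b, h x = h a + derivWithin h (Icc a b) a * (x - a) ∧
      derivWithin h (Icc a b) x = derivWithin h (Icc a b) a := by
  have hs : UniqueDiffOn ℝ (Icc a b) := uniqueDiffOn_Icc hab
  set h' := derivWithin h (Icc a b)
  have h'_const : ∀ x ∈ Icc a b, h' x = h' a := by
    refine constant_of_derivWithin_zero
      ((hh.derivWithin hs (by norm_num)).differentiableOn one_ne_zero) fun x hx => ?_
    rw [← iteratedDerivWithin_two, h₂ x (Ico_subset_Icc_self hx)]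
  have h_affine := eq_of_derivWithin_eq (g := fun x => h a + h' a * (x - a))
    (hh.differentiableOn two_ne_zero) (by fun_prop)
    (fun x hx => by
      rw [(((hasDerivAt_id' x).sub_const a).const_mul (h' a) |>.const_add (h a)).hasDerivWithinAt
        |>.derivWithin (hs x (Ico_subset_Icc_self hx)), mul_one]
      exact h'_const x (Ico_subset_Icc_self hx))
    (by simp)
  exact fun x hx => ⟨h_affine x hx, h'_const x hx⟩

/-- `U` and `V` are the endpoint value and slope of the solution with zero initial data. -/
theorem exists_iteratedDerivWithin_two_eq_with_initial_values {g : ℝ → ℝ} (hab : a < b)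
    (hg : ContinuousOn g (Icc a b)) :
    ∃ U V : ℝ, ∀ α β : ℝ, ∃ u : ℝ → ℝ, ContDiffOn ℝ 2 u (Icc a b) ∧
      (∀ x ∈ Icc a b, iteratedDerivWithin 2 u (Icc a b) x = g x) ∧
      u a = α ∧ derivWithin u (Icc a b) a = β ∧
      u b = α + β * (b - a) + U ∧ derivWithin u (Icc a b) b = β + V := by
  have hs : UniqueDiffOn ℝ (Icc a b) := uniqueDiffOn_Icc hab
  set G : ℝ → ℝ := fun x => g (projIcc a b hab.le x)
  have hG : Continuous G :=
    hg.comp_continuous (continuous_subtype_val.comp continuous_projIcc) fun x => Subtype.prop _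
  have hGg : ∀ x ∈ Icc a b, G x = g x := fun x hx => by simp [G, projIcc_of_mem _ hx]
  set P : ℝ → ℝ := fun x => ∫ t in a..x, G t
  have hP : ∀ x, HasDerivAt P (G x) x := fun x => (hG.integral_hasStrictDerivAt a x).hasDerivAt
  have hP_cont : Continuous P := continuous_iff_continuousAt.2 fun x => (hP x).continuousAt
  set F : ℝ → ℝ := fun x => ∫ t in a..x, P t
  have hF : ∀ x, HasDerivAt F (P x) x :=
    fun x => (hP_cont.integral_hasStrictDerivAt a x).hasDerivAt
  refine ⟨F b, P b, fun α β => ⟨fun x => α + β * (x - a) + F x, ?_⟩⟩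
  have hu : ∀ x, HasDerivAt (fun x => α + β * (x - a) + F x) (β + P x) x := fun x => by
    simpa using ((((hasDerivAt_id' x).sub_const a).const_mul β).const_add α).fun_add (hF x)
  have hu' : ∀ x, HasDerivAt (fun x => β + P x) (G x) x := fun x => (hP x).const_add β
  have hu_deriv : deriv (fun x => α + β * (x - a) + F x) = fun x => β + P x :=
    funext fun x => (hu x).deriv
  have hu_contDiff : ContDiff ℝ 2 fun x => α + β * (x - a) + F x := by
    rw [show (2 : WithTop ℕ∞) = 1 + 1 by norm_num, contDiff_succ_iff_deriv, hu_deriv,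
      contDiff_one_iff_deriv, funext fun x => (hu' x).deriv]
    exact ⟨fun x => (hu x).differentiableAt, by simp, fun x => (hu' x).differentiableAt, hG⟩
  have hu_derivWithin : ∀ x ∈ Icc a b,
      derivWithin (fun x => α + β * (x - a) + F x) (Icc a b) x = β + P x :=
    fun x hx => (hu x).hasDerivWithinAt.derivWithin (hs x hx)
  refine ⟨hu_contDiff.contDiffOn, fun x hx => ?_, by simp [F], ?_, rfl,
    hu_derivWithin b (right_mem_Icc.2 hab.le)⟩
  · rw [iteratedDerivWithin_eq_iteratedDeriv hs hu_contDiff.contDiffAt hx, iteratedDeriv_succ,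
      iteratedDeriv_one, hu_deriv, (hu' x).deriv, hGg x hx]
  · simp [hu_derivWithin a (left_mem_Icc.2 hab.le), P]

end SecondDerivative


namespace IsThreeTadpoleSolution

variable {k₁ k₂ k₃ : ℝ}

theorem sub {f₁ f₂ f₃ g₁ g₂ g₃ φ₁ φ₂ φ₃ ψ₁ ψ₂ ψ₃ : ℝ → ℝ}
    (hφ : IsThreeTadpoleSolution k₁ k₂ k₃ f₁ f₂ f₃ φ₁ φ₂ φ₃)
    (hψ : IsThreeTadpoleSolution k₁ k₂ k₃ g₁ g₂ g₃ ψ₁ ψ₂ ψ₃) :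
    IsThreeTadpoleSolution k₁ k₂ k₃ (f₁ - g₁) (f₂ - g₂) (f₃ - g₃)
      (φ₁ - ψ₁) (φ₂ - ψ₂) (φ₃ - ψ₃) := by
  obtain ⟨Cφ₁, Cφ₂, Cφ₃, Eφ₁, Eφ₂, Eφ₃, φ₃0, φ0, φ'0, φ₁₂, φ₂₃, φ'1⟩ := hφ
  obtain ⟨Cψ₁, Cψ₂, Cψ₃, Eψ₁, Eψ₂, Eψ₃, ψ₃0, ψ0, ψ'0, ψ₁₂, ψ₂₃, ψ'1⟩ := hψ
  have hs : UniqueDiffOn ℝ (Icc (0 : ℝ) 1) := uniqueDiffOn_Icc one_pos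
  have edge {k : ℝ} {f g φ ψ : ℝ → ℝ} (Cφ : ContDiffOn ℝ 2 φ (Icc 0 1))
      (Cψ : ContDiffOn ℝ 2 ψ (Icc 0 1))
      (Eφ : ∀ x ∈ Icc (0 : ℝ) 1, -(k * iteratedDerivWithin 2 φ (Icc 0 1) x) = f x)
      (Eψ : ∀ x ∈ Icc (0 : ℝ) 1, -(k * iteratedDerivWithin 2 ψ (Icc 0 1) x) = g x) :
      ∀ x ∈ Icc (0 : ℝ) 1, -(k * iteratedDerivWithin 2 (φ - ψ) (Icc 0 1) x) = (f - g) x :=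
    fun x hx => by
      rw [iteratedDerivWithin_sub hx hs (Cφ x hx) (Cψ x hx), Pi.sub_apply, ← Eφ x hx, ← Eψ x hx]
      ring
  have deriv_sub {φ ψ : ℝ → ℝ} (Cφ : ContDiffOn ℝ 2 φ (Icc 0 1))
      (Cψ : ContDiffOn ℝ 2 ψ (Icc 0 1)) {x : ℝ} (hx : x ∈ Icc (0 : ℝ) 1) :
      derivWithin (φ - ψ) (Icc 0 1) x = derivWithin φ (Icc 0 1) x - derivWithin ψ (Icc 0 1) x :=
    derivWithin_sub ((Cφ.differentiableOn two_ne_zero) x hx)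
      ((Cψ.differentiableOn two_ne_zero) x hx)
  have h0 : (0 : ℝ) ∈ Icc (0 : ℝ) 1 := left_mem_Icc.2 zero_le_one
  have h1 : (1 : ℝ) ∈ Icc (0 : ℝ) 1 := right_mem_Icc.2 zero_le_one
  refine ⟨Cφ₁.sub Cψ₁, Cφ₂.sub Cψ₂, Cφ₃.sub Cψ₃, edge Cφ₁ Cψ₁ Eφ₁ Eψ₁, edge Cφ₂ Cψ₂ Eφ₂ Eψ₂,
    edge Cφ₃ Cψ₃ Eφ₃ Eψ₃, ?_, ?_, ?_, ?_, ?_, ?_⟩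
  · simp [φ₃0, ψ₃0]
  · simp [φ0, ψ0]
  · rw [deriv_sub Cφ₁ Cψ₁ h0, deriv_sub Cφ₂ Cψ₂ h0]
    linear_combination φ'0 - ψ'0
  · simp [φ₁₂, ψ₁₂]
  · simp [φ₂₃, ψ₂₃]
  · rw [deriv_sub Cφ₁ Cψ₁ h1, deriv_sub Cφ₂ Cψ₂ h1, deriv_sub Cφ₃ Cψ₃ h1]
    linear_combination φ'1 - ψ'1

theorem eqOn_zero (hk₁ : k₁ ≠ 0) (hk₂ : k₂ ≠ 0) (hk₃ : k₃ ≠ 0) (hk₁₂ : k₁ + k₂ ≠ 0)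
    {ψ₁ ψ₂ ψ₃ : ℝ → ℝ} (h : IsThreeTadpoleSolution k₁ k₂ k₃ 0 0 0 ψ₁ ψ₂ ψ₃) :
    EqOn ψ₁ 0 (Icc 0 1) ∧ EqOn ψ₂ 0 (Icc 0 1) ∧ EqOn ψ₃ 0 (Icc 0 1) := by
  obtain ⟨C₁, C₂, C₃, E₁, E₂, E₃, ψ₃0, ψ0, ψ'0, ψ₁₂, ψ₂₃, ψ'1⟩ := h
  have affine {k : ℝ} {ψ : ℝ → ℝ} (hk : k ≠ 0) (C : ContDiffOn ℝ 2 ψ (Icc 0 1))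
      (E : ∀ x ∈ Icc (0 : ℝ) 1, -(k * iteratedDerivWithin 2 ψ (Icc 0 1) x) = (0 : ℝ → ℝ) x) :=
    eq_affine_of_iteratedDerivWithin_two_eq_zero one_pos C fun x hx => by simpa [hk] using E x hx
  have h1 : (1 : ℝ) ∈ Icc (0 : ℝ) 1 := right_mem_Icc.2 zero_le_one
  obtain ⟨A₁, B₁⟩ := affine hk₁ C₁ E₁ 1 h1
  obtain ⟨A₂, B₂⟩ := affine hk₂ C₂ E₂ 1 h1
  obtain ⟨A₃, B₃⟩ := affine hk₃ C₃ E₃ 1 h1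
  rw [B₁, B₂, B₃] at ψ'1
  set β₁ := derivWithin ψ₁ (Icc 0 1) 0
  set β₂ := derivWithin ψ₂ (Icc 0 1) 0
  set β₃ := derivWithin ψ₃ (Icc 0 1) 0
  have hβ₃ : β₃ = 0 := (mul_eq_zero.1 (by linear_combination ψ'1 - ψ'0)).resolve_left hk₃
  have hβ₁₂ : β₁ = β₂ := by linarith
  have hβ₁ : β₁ = 0 := (mul_eq_zero.1 (by linear_combination ψ'0 + k₂ * hβ₁₂)).resolve_left hk₁₂
  have hα : ψ₂ 0 = 0 := by linarith
  refine ⟨fun x hx => ?_, fun x hx => ?_, fun x hx => ?_⟩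
  · simp [(affine hk₁ C₁ E₁ x hx).1, ψ0, hα, β₁, hβ₁]
  · simp [(affine hk₂ C₂ E₂ x hx).1, hα, β₂, ← hβ₁₂, hβ₁]
  · simp [(affine hk₃ C₃ E₃ x hx).1, ψ₃0, β₃, hβ₃]

end IsThreeTadpoleSolution

theorem exists_isThreeTadpoleSolution {k₁ k₂ k₃ : ℝ} (hk₁ : k₁ ≠ 0) (hk₂ : k₂ ≠ 0)
    (hk₃ : k₃ ≠ 0) (hk₁₂ : k₁ + k₂ ≠ 0) {f₁ f₂ f₃ : ℝ → ℝ}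
    (hf₁ : ContinuousOn f₁ (Icc 0 1)) (hf₂ : ContinuousOn f₂ (Icc 0 1))
    (hf₃ : ContinuousOn f₃ (Icc 0 1)) :
    ∃ ψ₁ ψ₂ ψ₃ : ℝ → ℝ, IsThreeTadpoleSolution k₁ k₂ k₃ f₁ f₂ f₃ ψ₁ ψ₂ ψ₃ := by
  obtain ⟨U₁, V₁, hu₁⟩ :=
    exists_iteratedDerivWithin_two_eq_with_initial_values one_pos (hf₁.neg.div_const k₁)
  obtain ⟨U₂, V₂, hu₂⟩ :=
    exists_iteratedDerivWithin_two_eq_with_initial_values one_pos (hf₂.neg.div_const k₂)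
  obtain ⟨U₃, V₃, hu₃⟩ :=
    exists_iteratedDerivWithin_two_eq_with_initial_values one_pos (hf₃.neg.div_const k₃)
  -- Solve the vertex conditions for the loop value `α` and the initial slopes `βⱼ`.
  set β₁ := k₂ * (U₂ - U₁) / (k₁ + k₂)
  set β₂ := β₁ - (U₂ - U₁)
  set β₃ := -(k₁ * V₁ + k₂ * V₂ + k₃ * V₃) / k₃
  set α := U₃ + β₃ - U₂ - β₂
  obtain ⟨ψ₁, C₁, E₁, ψ₁0, ψ₁'0, ψ₁1, ψ₁'1⟩ := hu₁ α β₁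
  obtain ⟨ψ₂, C₂, E₂, ψ₂0, ψ₂'0, ψ₂1, ψ₂'1⟩ := hu₂ α β₂
  obtain ⟨ψ₃, C₃, E₃, ψ₃0, -, ψ₃1, ψ₃'1⟩ := hu₃ 0 β₃
  have hβ : k₁ * β₁ + k₂ * β₂ = 0 := by
    simp only [β₂, β₁]
    field_simp
    ring
  have hk₃β₃ : k₃ * β₃ = -(k₁ * V₁ + k₂ * V₂ + k₃ * V₃) := mul_div_cancel₀ _ hk₃
  refine ⟨ψ₁, ψ₂, ψ₃, C₁, C₂, C₃, ?_, ?_, ?_, ψ₃0, ψ₁0.trans ψ₂0.symm, ?_, ?_, ?_, ?_⟩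
  · intro x hx
    rw [E₁ x hx, Pi.neg_apply, mul_div_cancel₀ _ hk₁, neg_neg]
  · intro x hx
    rw [E₂ x hx, Pi.neg_apply, mul_div_cancel₀ _ hk₂, neg_neg]
  · intro x hx
    rw [E₃ x hx, Pi.neg_apply, mul_div_cancel₀ _ hk₃, neg_neg]
  · rwa [ψ₁'0, ψ₂'0]
  · rw [ψ₁1, ψ₂1]
    ring
  · rw [ψ₂1, ψ₃1]
    ring
  · rw [ψ₁'1, ψ₂'1, ψ₃'1]
    linear_combination hβ + hk₃β₃

/-- Well-posedness for a three-phase equilateral tadpole network (Theorem 4.2):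
with conductivities `(k₁, k₂, k₃) = (k⁻, k⁺, k⁺)`, `k⁺ > 0 > k⁻`, the problem is
well-posed provided `|k⁻|/k⁺ ≠ 1`. -/
theorem stmt_10 (kp km : ℝ) (hkp : 0 < kp) (hkm : km < 0)
    (hres : |km| / kp ≠ 1)
    (k₁ k₂ k₃ : ℝ) (hk₁ : k₁ = km) (hk₂ : k₂ = kp) (hk₃ : k₃ = kp)
    (f₁ f₂ f₃ : ℝ → ℝ)
    (hf₁ : ContinuousOn f₁ (Set.Icc 0 1)) (hf₂ : ContinuousOn f₂ (Set.Icc 0 1))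
    (hf₃ : ContinuousOn f₃ (Set.Icc 0 1)) :
    ∃ ψ₁ ψ₂ ψ₃ : ℝ → ℝ, IsThreeTadpoleSolution k₁ k₂ k₃ f₁ f₂ f₃ ψ₁ ψ₂ ψ₃ ∧
      ∀ φ₁ φ₂ φ₃ : ℝ → ℝ, IsThreeTadpoleSolution k₁ k₂ k₃ f₁ f₂ f₃ φ₁ φ₂ φ₃ →
        (∀ x ∈ Set.Icc (0 : ℝ) 1, φ₁ x = ψ₁ x) ∧
        (∀ x ∈ Set.Icc (0 : ℝ) 1, φ₂ x = ψ₂ x) ∧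
        (∀ x ∈ Set.Icc (0 : ℝ) 1, φ₃ x = ψ₃ x) := by
  subst k₁ k₂ k₃
  have hkm₀ : km ≠ 0 := hkm.ne
  have hkp₀ : kp ≠ 0 := hkp.ne'
  have hsum : km + kp ≠ 0 := by
    rw [abs_of_neg hkm, Ne, div_eq_one_iff_eq hkp₀] at hres
    contrapose! hres
    linarith
  obtain ⟨ψ₁, ψ₂, ψ₃, hψ⟩ := exists_isThreeTadpoleSolution hkm₀ hkp₀ hkp₀ hsum hf₁ hf₂ hf₃
  refine ⟨ψ₁, ψ₂, ψ₃, hψ, fun φ₁ φ₂ φ₃ hφ => ?_⟩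
  have hdiff := hφ.sub hψ
  simp only [sub_self] at hdiff
  obtain ⟨h₁, h₂, h₃⟩ := hdiff.eqOn_zero hkm₀ hkp₀ hkp₀ hsum
  exact ⟨fun x hx => sub_eq_zero.1 (h₁ hx), fun x hx => sub_eq_zero.1 (h₂ hx),
    fun x hx => sub_eq_zero.1 (h₃ hx)⟩
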